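/- Let X = (X₁, X₂) and Y = (Y₁, Y₂) be nonnegative bivariate random vectors with joint CDFs F_X, F_Y, and let u : ℝ≥0 × ℝ≥0 → ℝ≥0 be C² with ∂u/∂x₁ ≥ 0, ∂u/∂x₂ ≥ 0, and ∂²u/∂x₁∂x₂ ≤ 0. If F_X(t,z) ≤ F_Y(t,z) for all t, z ≥ 0, then E[u(X)] ≥ E[u(Y)]. -/

import Mathlib

/-!
Write `κ = -∂₂∂₁u ≥ 0`. By the fundamental theorem of calculus, for `a, b ≥ 0`,
`u a b + ∫₀ᵃ∫₀ᵇ κ = u 0 0 + ∫₀ᵃ ∂₁u(t, 0) dt + ∫₀ᵇ ∂₂u(0, z) dz`, so by the layer-cake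
formula, for a nonnegative random vector `V`,
`E u(V) + ∫∫ κ(t, z) P(t < V₁, z < V₂)`
`  = u 0 0 + ∫ ∂₁u(t, 0) P(t < V₁) dt + ∫ ∂₂u(0, z) P(z < V₂) dz`.
Inclusion–exclusion turns `F_X ≤ F_Y` (which also orders the marginal CDFs) into
`P(t < X₁, z < X₂) ≤ P(t < Y₁, z < Y₂) + (P(t < X₁) - P(t < Y₁)) + (P(z < X₂) - P(z < Y₂))`.
Since `∂₁u, ∂₂u ≥ 0`, the sections of `κ` integrate to at most `∂₁u(t, 0)` and `∂₂u(0, z)`, so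
the extra terms in the `κ`-integral for `X` are paid for by the marginal terms, which are larger
for `X` than for `Y`. Everything is done in `ℝ≥0∞`; integrability of `u(X)` allows cancelling.
-/

open MeasureTheory Set Function
open scoped ENNReal

section PartialDeriv

variable {E : Type*} [NormedAddCommGroup E] [NormedSpace ℝ E] {u : ℝ → ℝ → E}

noncomputable def derivFst (u : ℝ → ℝ → E) (x y : ℝ) : E := deriv (fun t => u t y) x

noncomputable def derivSnd (u : ℝ → ℝ → E) (x y : ℝ) : E := deriv (fun z => u x z) y

theorem DifferentiableAt.hasDerivAt_uncurry_fst {x y : ℝ}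
    (h : DifferentiableAt ℝ (uncurry u) (x, y)) :
    HasDerivAt (fun t => u t y) (fderiv ℝ (uncurry u) (x, y) (1, 0)) x := by
  simpa [comp_def] using
    h.hasFDerivAt.comp_hasDerivAt x ((hasDerivAt_id x).prodMk (hasDerivAt_const x y))

theorem DifferentiableAt.hasDerivAt_uncurry_snd {x y : ℝ}
    (h : DifferentiableAt ℝ (uncurry u) (x, y)) :
    HasDerivAt (fun z => u x z) (fderiv ℝ (uncurry u) (x, y) (0, 1)) y := by
  simpa [comp_def] using
    h.hasFDerivAt.comp_hasDerivAt y ((hasDerivAt_const y x).prodMk (hasDerivAt_id y))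

theorem uncurry_derivFst_eq_fderiv (hu : Differentiable ℝ (uncurry u)) :
    uncurry (derivFst u) = fun p => fderiv ℝ (uncurry u) p (1, 0) :=
  funext fun p => (hu p).hasDerivAt_uncurry_fst.deriv

theorem uncurry_derivSnd_eq_fderiv (hu : Differentiable ℝ (uncurry u)) :
    uncurry (derivSnd u) = fun p => fderiv ℝ (uncurry u) p (0, 1) :=
  funext fun p => (hu p).hasDerivAt_uncurry_snd.deriv

theorem ContDiff.uncurry_derivFst {m n : WithTop ℕ∞} (hu : ContDiff ℝ n (uncurry u))
    (hmn : m + 1 ≤ n) : ContDiff ℝ m (uncurry (derivFst u)) := by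
  rw [uncurry_derivFst_eq_fderiv (hu.differentiable (by aesop))]
  exact (hu.fderiv_right hmn).clm_apply contDiff_const

theorem ContDiff.uncurry_derivSnd {m n : WithTop ℕ∞} (hu : ContDiff ℝ n (uncurry u))
    (hmn : m + 1 ≤ n) : ContDiff ℝ m (uncurry (derivSnd u)) := by
  rw [uncurry_derivSnd_eq_fderiv (hu.differentiable (by aesop))]
  exact (hu.fderiv_right hmn).clm_apply contDiff_const

theorem ContDiff.continuous_uncurry_derivFst (hu : ContDiff ℝ 1 (uncurry u)) :
    Continuous (uncurry (derivFst u)) :=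
  (hu.uncurry_derivFst (m := 0) (by simp)).continuous

theorem ContDiff.continuous_uncurry_derivSnd (hu : ContDiff ℝ 1 (uncurry u)) :
    Continuous (uncurry (derivSnd u)) :=
  (hu.uncurry_derivSnd (m := 0) (by simp)).continuous

theorem ContDiff.hasDerivAt_derivFst {n : WithTop ℕ∞} (hu : ContDiff ℝ n (uncurry u))
    (hn : n ≠ 0) (x y : ℝ) : HasDerivAt (fun t => u t y) (derivFst u x y) x :=
  (hu.differentiable hn (x, y)).hasDerivAt_uncurry_fst.differentiableAt.hasDerivAt

theorem ContDiff.hasDerivAt_derivSnd {n : WithTop ℕ∞} (hu : ContDiff ℝ n (uncurry u))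
    (hn : n ≠ 0) (x y : ℝ) : HasDerivAt (fun z => u x z) (derivSnd u x y) y :=
  (hu.differentiable hn (x, y)).hasDerivAt_uncurry_snd.differentiableAt.hasDerivAt

theorem derivSnd_derivFst (hu : ContDiff ℝ 2 (uncurry u)) :
    derivSnd (derivFst u) = derivFst (derivSnd u) := by
  have hd : Differentiable ℝ (uncurry u) := hu.differentiable (by norm_num)
  have hd' : Differentiable ℝ (fderiv ℝ (uncurry u)) :=
    (hu.fderiv_right (m := 1) (by norm_num)).differentiable one_ne_zero
  have hd₁ : Differentiable ℝ (uncurry (derivFst u)) :=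
    (hu.uncurry_derivFst (m := 1) (by norm_num)).differentiable one_ne_zero
  have hd₂ : Differentiable ℝ (uncurry (derivSnd u)) :=
    (hu.uncurry_derivSnd (m := 1) (by norm_num)).differentiable one_ne_zero
  ext x y
  have fderiv_apply (v w : ℝ × ℝ) : fderiv ℝ (fun p => fderiv ℝ (uncurry u) p v) (x, y) w =
      fderiv ℝ (fderiv ℝ (uncurry u)) (x, y) w v := by
    rw [fderiv_clm_apply (hd' _) (differentiableAt_const v)]
    simp
  calc derivSnd (derivFst u) x y
      = fderiv ℝ (uncurry (derivFst u)) (x, y) (0, 1) :=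
        congrFun (uncurry_derivSnd_eq_fderiv hd₁) (x, y)
    _ = fderiv ℝ (fderiv ℝ (uncurry u)) (x, y) (0, 1) (1, 0) := by
        rw [uncurry_derivFst_eq_fderiv hd, fderiv_apply]
    _ = fderiv ℝ (fderiv ℝ (uncurry u)) (x, y) (1, 0) (0, 1) :=
        (hu.contDiffAt.isSymmSndFDerivAt (by simp)).eq _ _
    _ = fderiv ℝ (uncurry (derivSnd u)) (x, y) (1, 0) := by
        rw [uncurry_derivSnd_eq_fderiv hd, fderiv_apply]
    _ = derivFst (derivSnd u) x y := (congrFun (uncurry_derivFst_eq_fderiv hd₂) (x, y)).symm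

variable [CompleteSpace E]

theorem ContDiff.integral_derivFst (hu : ContDiff ℝ 1 (uncurry u)) (y a b : ℝ) :
    ∫ t in a..b, derivFst u t y = u b y - u a y :=
  intervalIntegral.integral_eq_sub_of_hasDerivAt
    (fun t _ => hu.hasDerivAt_derivFst one_ne_zero t y)
    ((hu.continuous_uncurry_derivFst.uncurry_right y).intervalIntegrable _ _)

theorem ContDiff.integral_derivSnd (hu : ContDiff ℝ 1 (uncurry u)) (x a b : ℝ) :
    ∫ z in a..b, derivSnd u x z = u x b - u x a :=
  intervalIntegral.integral_eq_sub_of_hasDerivAt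
    (fun z _ => hu.hasDerivAt_derivSnd one_ne_zero x z)
    ((hu.continuous_uncurry_derivSnd.uncurry_left x).intervalIntegrable _ _)

theorem ContDiff.integral_integral_derivSnd_derivFst (hu : ContDiff ℝ 2 (uncurry u))
    (a₀ a b₀ b : ℝ) :
    ∫ t in a₀..a, ∫ z in b₀..b, derivSnd (derivFst u) t z =
      u a b - u a b₀ - (u a₀ b - u a₀ b₀) := by
  have hu₁ : ContDiff ℝ 1 (uncurry (derivFst u)) := hu.uncurry_derivFst (by norm_num)
  have hint (y : ℝ) : IntervalIntegrable (fun t => derivFst u t y) volume a₀ a :=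
    (hu₁.continuous.uncurry_right y).intervalIntegrable _ _
  simp only [hu₁.integral_derivSnd]
  rw [intervalIntegral.integral_sub (hint b) (hint b₀), (hu.of_le one_le_two).integral_derivFst,
    (hu.of_le one_le_two).integral_derivFst]
  abel

end PartialDeriv

theorem lintegral_Ioi_ofReal_neg_le {f f' : ℝ → ℝ} {a : ℝ} (hf : ∀ x, HasDerivAt f (f' x) x)
    (hf' : Continuous f') (hf'_nonpos : ∀ x, f' x ≤ 0) (hf_nonneg : ∀ x, 0 ≤ f x) :
    ∫⁻ x in Ioi a, ENNReal.ofReal (-f' x) ≤ ENNReal.ofReal (f a) := by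
  have hIoi : Ioi a = ⋃ n : ℕ, Ioc a (a + n) := by
    ext x
    simp only [mem_Ioi, mem_iUnion, mem_Ioc]
    exact ⟨fun hx => (exists_nat_ge (x - a)).imp fun n hn => ⟨hx, by linarith⟩,
      fun ⟨_, hx, _⟩ => hx⟩
  have hmono : Monotone fun n : ℕ => Ioc a (a + n) := fun m n hmn =>
    Ioc_subset_Ioc_right (by simp [hmn])
  rw [hIoi, setLIntegral_iUnion_of_directed _ hmono.directed_le]
  refine iSup_le fun n => ?_
  have hn : a ≤ a + n := by simp
  rw [← ofReal_integral_eq_lintegral_ofReal (f := fun x => -f' x) hf'.neg.integrableOn_Ioc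
      (Filter.Eventually.of_forall fun x => neg_nonneg.2 (hf'_nonpos x)),
    ← intervalIntegral.integral_of_le hn, intervalIntegral.integral_neg,
    intervalIntegral.integral_eq_sub_of_hasDerivAt (fun x _ => hf x) (hf'.intervalIntegrable _ _)]
  exact ENNReal.ofReal_le_ofReal (by linarith [hf_nonneg (a + n)])

section Tonelli

variable {α β : Type*} [MeasurableSpace α] [MeasurableSpace β] {μ : Measure α} {ν : Measure β}
  [SFinite μ] [SFinite ν]

theorem lintegral_setLIntegral_slice {s : Set (α × β)} (hs : MeasurableSet s) {φ : β → ℝ≥0∞}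
    (hφ : Measurable φ) :
    ∫⁻ a, ∫⁻ b in Prod.mk a ⁻¹' s, φ b ∂ν ∂μ = ∫⁻ b, μ ((·, b) ⁻¹' s) * φ b ∂ν := by
  calc ∫⁻ a, ∫⁻ b in Prod.mk a ⁻¹' s, φ b ∂ν ∂μ
      = ∫⁻ a, ν.withDensity φ (Prod.mk a ⁻¹' s) ∂μ := by
        simp_rw [withDensity_apply _ (measurable_prodMk_left hs)]
    _ = μ.prod (ν.withDensity φ) s := (Measure.prod_apply hs).symm
    _ = ∫⁻ b, μ ((·, b) ⁻¹' s) ∂ν.withDensity φ := Measure.prod_apply_symm hs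
    _ = ∫⁻ b, μ ((·, b) ⁻¹' s) * φ b ∂ν := by
        rw [lintegral_withDensity_eq_lintegral_mul _ hφ (measurable_measure_prodMk_right hs)]
        simp only [Pi.mul_apply, mul_comm]

variable {s : Set α} {t : Set β} {κ : α × β → ℝ≥0∞}

theorem setLIntegral_prod_fst_mul_le {d g : α → ℝ≥0∞} (hd : Measurable d) (hκ : Measurable κ)
    (hκg : ∀ x, ∫⁻ y in t, κ (x, y) ∂ν ≤ g x) :
    ∫⁻ p in s ×ˢ t, d p.1 * κ p ∂μ.prod ν ≤ ∫⁻ x in s, d x * g x ∂μ := by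
  rw [setLIntegral_prod (fun p => d p.1 * κ p) ((hd.comp measurable_fst).mul hκ).aemeasurable]
  exact lintegral_mono fun x =>
    (lintegral_const_mul (d x) (hκ.comp measurable_prodMk_left)).trans_le
      (by gcongr; exact hκg x)

theorem setLIntegral_prod_snd_mul_le {d g : β → ℝ≥0∞} (hd : Measurable d) (hκ : Measurable κ)
    (hκg : ∀ y, ∫⁻ x in s, κ (x, y) ∂μ ≤ g y) :
    ∫⁻ p in s ×ˢ t, d p.2 * κ p ∂μ.prod ν ≤ ∫⁻ y in t, d y * g y ∂ν := by
  rw [setLIntegral_prod_symm (fun p => d p.2 * κ p)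
    ((hd.comp measurable_snd).mul hκ).aemeasurable]
  exact lintegral_mono fun y =>
    (lintegral_const_mul (d y) (hκ.comp measurable_prodMk_right)).trans_le
      (by gcongr; exact hκg y)

end Tonelli

theorem ofReal_intervalIntegral_intervalIntegral {k : ℝ × ℝ → ℝ} (hk : Continuous k)
    (hknn : 0 ≤ k) {a b : ℝ} (ha : 0 ≤ a) (hb : 0 ≤ b) :
    ENNReal.ofReal (∫ t in 0..a, ∫ z in 0..b, k (t, z)) =
      ∫⁻ p in Ioo 0 a ×ˢ Ioo 0 b, ENNReal.ofReal (k p) := by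
  have hint : IntegrableOn k (Ioo 0 a ×ˢ Ioo 0 b) := by
    refine (hk.integrableOn_Icc (a := ((0 : ℝ), (0 : ℝ))) (b := (a, b))).mono_set ?_
    rw [← Icc_prod_Icc]
    exact prod_mono Ioo_subset_Icc_self Ioo_subset_Icc_self
  simp_rw [intervalIntegral.integral_of_le ha, intervalIntegral.integral_of_le hb,
    integral_Ioc_eq_integral_Ioo]
  rw [Measure.volume_eq_prod, ← setIntegral_prod _ hint, ← Measure.volume_eq_prod,
    ofReal_integral_eq_lintegral_ofReal hint (Filter.Eventually.of_forall hknn)]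

theorem lintegral_comp_eq_lintegral_meas_lt_mul_prod {Ω : Type*} [MeasurableSpace Ω]
    (μ : Measure Ω) [SFinite μ] {V : Ω → ℝ × ℝ} (hV : Measurable V)
    (hVnn : ∀ ω, 0 ≤ (V ω).1 ∧ 0 ≤ (V ω).2) {k : ℝ × ℝ → ℝ} (hk : Continuous k)
    (hknn : 0 ≤ k) :
    ∫⁻ ω, ENNReal.ofReal (∫ t in 0..(V ω).1, ∫ z in 0..(V ω).2, k (t, z)) ∂μ =
      ∫⁻ p in Ioi 0 ×ˢ Ioi 0, μ {ω | p.1 < (V ω).1 ∧ p.2 < (V ω).2} * ENNReal.ofReal (k p) := by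
  set s : Set (Ω × (ℝ × ℝ)) := {q | q.2.1 < (V q.1).1 ∧ q.2.2 < (V q.1).2}
  have hs : MeasurableSet s :=
    (measurableSet_lt measurable_snd.fst (hV.fst.comp measurable_fst)).inter
      (measurableSet_lt measurable_snd.snd (hV.snd.comp measurable_fst))
  have hslice (ω : Ω) :
      ∫⁻ p in Prod.mk ω ⁻¹' s, ENNReal.ofReal (k p) ∂volume.restrict (Ioi 0 ×ˢ Ioi 0) =
        ENNReal.ofReal (∫ t in 0..(V ω).1, ∫ z in 0..(V ω).2, k (t, z)) := by
    rw [Measure.restrict_restrict (measurable_prodMk_left hs),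
      ofReal_intervalIntegral_intervalIntegral hk hknn (hVnn ω).1 (hVnn ω).2]
    congr 2
    ext p
    simp [s, and_comm, and_assoc, and_left_comm]
  simp_rw [← hslice]
  exact lintegral_setLIntegral_slice hs (ENNReal.measurable_ofReal.comp hk.measurable)

section Dominance

variable {Ω : Type*} [MeasurableSpace Ω] {μ : Measure Ω}

def JointCDFLE (μ : Measure Ω) (X Y : Ω → ℝ × ℝ) : Prop :=
  ∀ t z : ℝ, μ {ω | (X ω).1 ≤ t ∧ (X ω).2 ≤ z} ≤ μ {ω | (Y ω).1 ≤ t ∧ (Y ω).2 ≤ z}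

theorem measureReal_compl_inter_compl [IsProbabilityMeasure μ] {A B : Set Ω}
    (hA : MeasurableSet A) (hB : MeasurableSet B) :
    μ.real (Aᶜ ∩ Bᶜ) = 1 - μ.real A - μ.real B + μ.real (A ∩ B) := by
  rw [← compl_union, probReal_compl_eq_one_sub (hA.union hB)]
  linarith [measureReal_union_add_inter (s := A) hB (μ := μ)]

theorem measure_compl_inter_compl_le [IsProbabilityMeasure μ] {A B A' B' : Set Ω}
    (hA : MeasurableSet A) (hB : MeasurableSet B) (hA' : MeasurableSet A')
    (hB' : MeasurableSet B') (hAB : μ (A ∩ B) ≤ μ (A' ∩ B')) (hAA' : μ A ≤ μ A')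
    (hBB' : μ B ≤ μ B') :
    μ (Aᶜ ∩ Bᶜ) ≤ μ (A'ᶜ ∩ B'ᶜ) + (μ Aᶜ - μ A'ᶜ) + (μ Bᶜ - μ B'ᶜ) := by
  have hAc : μ A'ᶜ ≤ μ Aᶜ := by
    rw [prob_compl_eq_one_sub hA, prob_compl_eq_one_sub hA']; exact tsub_le_tsub_left hAA' 1
  have hBc : μ B'ᶜ ≤ μ Bᶜ := by
    rw [prob_compl_eq_one_sub hB, prob_compl_eq_one_sub hB']; exact tsub_le_tsub_left hBB' 1
  have hAB' : μ.real (A ∩ B) ≤ μ.real (A' ∩ B') := ENNReal.toReal_mono (measure_ne_top μ _) hAB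
  rw [← ENNReal.toReal_le_toReal (by finiteness) (by finiteness),
    ENNReal.toReal_add (by finiteness) (by finiteness),
    ENNReal.toReal_add (by finiteness) (by finiteness),
    ENNReal.toReal_sub_of_le hAc (by finiteness), ENNReal.toReal_sub_of_le hBc (by finiteness)]
  simp only [← measureReal_def]
  rw [measureReal_compl_inter_compl hA hB, measureReal_compl_inter_compl hA' hB',
    probReal_compl_eq_one_sub hA, probReal_compl_eq_one_sub hA',
    probReal_compl_eq_one_sub hB, probReal_compl_eq_one_sub hB']
  linarith

theorem measure_eq_iSup_measure_inter_le (s : Set Ω) (f : Ω → ℝ) :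
    μ s = ⨆ n : ℕ, μ (s ∩ {ω | f ω ≤ n}) := by
  have hs : s = ⋃ n : ℕ, s ∩ {ω | f ω ≤ n} := by
    rw [← inter_iUnion, eq_comm, inter_eq_left]
    exact fun ω _ => mem_iUnion.2 (exists_nat_ge (f ω))
  conv_lhs => rw [hs]
  exact Monotone.measure_iUnion fun m n hmn =>
    inter_subset_inter_right s fun ω (hω : f ω ≤ m) => hω.trans (Nat.cast_le.2 hmn)

theorem measurable_measure_lt (f : Ω → ℝ) : Measurable fun t => μ {ω | t < f ω} :=
  Antitone.measurable fun _ _ hst => measure_mono fun _ (hω : _ < _) => hst.trans_lt hω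

theorem measurable_measure_lt_and_lt [SFinite μ] {V : Ω → ℝ × ℝ} (hV : Measurable V) :
    Measurable fun p : ℝ × ℝ => μ {ω | p.1 < (V ω).1 ∧ p.2 < (V ω).2} :=
  measurable_measure_prodMk_left
    ((measurableSet_lt measurable_fst.fst (hV.fst.comp measurable_snd)).inter
      (measurableSet_lt measurable_fst.snd (hV.snd.comp measurable_snd)))

variable {X Y : Ω → ℝ × ℝ}

theorem JointCDFLE.of_nonneg (hXnn : ∀ ω, 0 ≤ (X ω).1 ∧ 0 ≤ (X ω).2)
    (h : ∀ t z : ℝ, 0 ≤ t → 0 ≤ z →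
      μ {ω | (X ω).1 ≤ t ∧ (X ω).2 ≤ z} ≤ μ {ω | (Y ω).1 ≤ t ∧ (Y ω).2 ≤ z}) :
    JointCDFLE μ X Y := by
  intro t z
  by_cases htz : 0 ≤ t ∧ 0 ≤ z
  · exact h t z htz.1 htz.2
  · have hempty : {ω | (X ω).1 ≤ t ∧ (X ω).2 ≤ z} = ∅ := eq_empty_of_forall_notMem
      fun ω hω => htz ⟨(hXnn ω).1.trans hω.1, (hXnn ω).2.trans hω.2⟩
    simp [hempty]

theorem JointCDFLE.measure_fst_le (h : JointCDFLE μ X Y) (t : ℝ) :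
    μ {ω | (X ω).1 ≤ t} ≤ μ {ω | (Y ω).1 ≤ t} := by
  rw [measure_eq_iSup_measure_inter_le _ fun ω => (X ω).2,
    measure_eq_iSup_measure_inter_le _ fun ω => (Y ω).2]
  exact iSup_mono fun n => h t n

theorem JointCDFLE.measure_snd_le (h : JointCDFLE μ X Y) (z : ℝ) :
    μ {ω | (X ω).2 ≤ z} ≤ μ {ω | (Y ω).2 ≤ z} := by
  rw [measure_eq_iSup_measure_inter_le _ fun ω => (X ω).1,
    measure_eq_iSup_measure_inter_le _ fun ω => (Y ω).1]
  refine iSup_mono fun n => ?_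
  rw [inter_comm, inter_comm {ω | (Y ω).2 ≤ z}]
  exact h n z

variable [IsProbabilityMeasure μ]

theorem JointCDFLE.measure_lt_fst_le (h : JointCDFLE μ X Y) (hX : Measurable X)
    (hY : Measurable Y) (t : ℝ) : μ {ω | t < (Y ω).1} ≤ μ {ω | t < (X ω).1} := by
  simp only [← not_le, ← compl_ofPred]
  rw [prob_compl_eq_one_sub (measurableSet_le hY.fst measurable_const),
    prob_compl_eq_one_sub (measurableSet_le hX.fst measurable_const)]
  exact tsub_le_tsub_left (h.measure_fst_le t) 1

theorem JointCDFLE.measure_lt_snd_le (h : JointCDFLE μ X Y) (hX : Measurable X)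
    (hY : Measurable Y) (z : ℝ) : μ {ω | z < (Y ω).2} ≤ μ {ω | z < (X ω).2} := by
  simp only [← not_le, ← compl_ofPred]
  rw [prob_compl_eq_one_sub (measurableSet_le hY.snd measurable_const),
    prob_compl_eq_one_sub (measurableSet_le hX.snd measurable_const)]
  exact tsub_le_tsub_left (h.measure_snd_le z) 1

theorem JointCDFLE.measure_lt_and_lt_le (h : JointCDFLE μ X Y) (hX : Measurable X)
    (hY : Measurable Y) (t z : ℝ) :
    μ {ω | t < (X ω).1 ∧ z < (X ω).2} ≤ μ {ω | t < (Y ω).1 ∧ z < (Y ω).2} +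
      (μ {ω | t < (X ω).1} - μ {ω | t < (Y ω).1}) +
      (μ {ω | z < (X ω).2} - μ {ω | z < (Y ω).2}) := by
  have h := measure_compl_inter_compl_le (μ := μ) (measurableSet_le hX.fst measurable_const)
    (measurableSet_le hX.snd measurable_const) (measurableSet_le hY.fst measurable_const)
    (measurableSet_le hY.snd measurable_const) (h t z) (h.measure_fst_le t) (h.measure_snd_le z)
  simpa only [compl_ofPred, not_le, ← ofPred_and] using h

end Dominance

section SurvivalIntegral

variable {Ω : Type*} [MeasurableSpace Ω]

noncomputable def marginalSurvivalIntegral (μ : Measure Ω) (V : Ω → ℝ × ℝ)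
    (g₁ g₂ : ℝ → ℝ≥0∞) : ℝ≥0∞ :=
  (∫⁻ t in Ioi 0, μ {ω | t < (V ω).1} * g₁ t) + ∫⁻ z in Ioi 0, μ {ω | z < (V ω).2} * g₂ z

noncomputable def jointSurvivalIntegral (μ : Measure Ω) (V : Ω → ℝ × ℝ)
    (κ : ℝ × ℝ → ℝ≥0∞) : ℝ≥0∞ :=
  ∫⁻ p in Ioi 0 ×ˢ Ioi 0, μ {ω | p.1 < (V ω).1 ∧ p.2 < (V ω).2} * κ p

variable {μ : Measure Ω} [IsProbabilityMeasure μ] {X Y : Ω → ℝ × ℝ} {g₁ g₂ : ℝ → ℝ≥0∞}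
  {κ : ℝ × ℝ → ℝ≥0∞}

theorem JointCDFLE.marginalSurvivalIntegral_add_le (h : JointCDFLE μ X Y) (hX : Measurable X)
    (hY : Measurable Y) (g₁ g₂ : ℝ → ℝ≥0∞) :
    marginalSurvivalIntegral μ Y g₁ g₂ +
        ((∫⁻ t in Ioi 0, (μ {ω | t < (X ω).1} - μ {ω | t < (Y ω).1}) * g₁ t) +
          ∫⁻ z in Ioi 0, (μ {ω | z < (X ω).2} - μ {ω | z < (Y ω).2}) * g₂ z) ≤
      marginalSurvivalIntegral μ X g₁ g₂ := by
  rw [marginalSurvivalIntegral, marginalSurvivalIntegral, add_add_add_comm]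
  gcongr <;> refine (le_lintegral_add _ _).trans_eq (lintegral_congr fun t => ?_) <;>
    rw [← add_mul, add_tsub_cancel_of_le]
  exacts [h.measure_lt_fst_le hX hY t, h.measure_lt_snd_le hX hY t]

theorem JointCDFLE.jointSurvivalIntegral_le (h : JointCDFLE μ X Y) (hX : Measurable X)
    (hY : Measurable Y) (hκ : Measurable κ) (hκ₁ : ∀ t, ∫⁻ z in Ioi 0, κ (t, z) ≤ g₁ t)
    (hκ₂ : ∀ z, ∫⁻ t in Ioi 0, κ (t, z) ≤ g₂ z) :
    jointSurvivalIntegral μ X κ ≤ jointSurvivalIntegral μ Y κ +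
      ((∫⁻ t in Ioi 0, (μ {ω | t < (X ω).1} - μ {ω | t < (Y ω).1}) * g₁ t) +
        ∫⁻ z in Ioi 0, (μ {ω | z < (X ω).2} - μ {ω | z < (Y ω).2}) * g₂ z) := by
  set d₁ : ℝ → ℝ≥0∞ := fun t => μ {ω | t < (X ω).1} - μ {ω | t < (Y ω).1}
  set d₂ : ℝ → ℝ≥0∞ := fun z => μ {ω | z < (X ω).2} - μ {ω | z < (Y ω).2}
  have hd₁ : Measurable d₁ := (measurable_measure_lt _).sub (measurable_measure_lt _)
  have hd₂ : Measurable d₂ := (measurable_measure_lt _).sub (measurable_measure_lt _)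
  have hmY : Measurable fun p : ℝ × ℝ => μ {ω | p.1 < (Y ω).1 ∧ p.2 < (Y ω).2} * κ p :=
    (measurable_measure_lt_and_lt hY).mul hκ
  have hd₂κ : Measurable fun p : ℝ × ℝ => d₂ p.2 * κ p := (hd₂.comp measurable_snd).mul hκ
  calc jointSurvivalIntegral μ X κ
      ≤ ∫⁻ p in Ioi 0 ×ˢ Ioi 0,
          (μ {ω | p.1 < (Y ω).1 ∧ p.2 < (Y ω).2} + d₁ p.1 + d₂ p.2) * κ p :=
        lintegral_mono fun p => by gcongr; exact h.measure_lt_and_lt_le hX hY p.1 p.2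
    _ = jointSurvivalIntegral μ Y κ +
          ((∫⁻ p in Ioi 0 ×ˢ Ioi 0, d₁ p.1 * κ p) + ∫⁻ p in Ioi 0 ×ˢ Ioi 0, d₂ p.2 * κ p) := by
        simp only [add_mul]
        rw [lintegral_add_right _ hd₂κ, lintegral_add_left hmY, add_assoc]
        rfl
    _ ≤ _ := by
        rw [Measure.volume_eq_prod]
        gcongr
        exacts [setLIntegral_prod_fst_mul_le hd₁ hκ hκ₁, setLIntegral_prod_snd_mul_le hd₂ hκ hκ₂]

theorem JointCDFLE.marginalSurvivalIntegral_add_jointSurvivalIntegral_le (h : JointCDFLE μ X Y)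
    (hX : Measurable X) (hY : Measurable Y) (hκ : Measurable κ)
    (hκ₁ : ∀ t, ∫⁻ z in Ioi 0, κ (t, z) ≤ g₁ t) (hκ₂ : ∀ z, ∫⁻ t in Ioi 0, κ (t, z) ≤ g₂ z) :
    marginalSurvivalIntegral μ Y g₁ g₂ + jointSurvivalIntegral μ X κ ≤
      marginalSurvivalIntegral μ X g₁ g₂ + jointSurvivalIntegral μ Y κ := by
  obtain ⟨D, hJ, hM⟩ : ∃ D, jointSurvivalIntegral μ X κ ≤ jointSurvivalIntegral μ Y κ + D ∧
      marginalSurvivalIntegral μ Y g₁ g₂ + D ≤ marginalSurvivalIntegral μ X g₁ g₂ :=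
    ⟨_, h.jointSurvivalIntegral_le hX hY hκ hκ₁ hκ₂, h.marginalSurvivalIntegral_add_le hX hY g₁ g₂⟩
  calc _ ≤ marginalSurvivalIntegral μ Y g₁ g₂ + (jointSurvivalIntegral μ Y κ + D) := by gcongr
    _ = marginalSurvivalIntegral μ Y g₁ g₂ + D + jointSurvivalIntegral μ Y κ := by ring
    _ ≤ _ := by gcongr

end SurvivalIntegral

section Utility

variable {u : ℝ → ℝ → ℝ} {Ω : Type*} [MeasurableSpace Ω] {μ : Measure Ω} {V : Ω → ℝ × ℝ}

theorem ContDiff.add_le_add_of_derivSnd_derivFst_nonpos (hu : ContDiff ℝ 2 (uncurry u))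
    (hu₁₂ : ∀ x y, derivSnd (derivFst u) x y ≤ 0) {a₀ a b₀ b : ℝ} (ha : a₀ ≤ a) (hb : b₀ ≤ b) :
    u a b + u a₀ b₀ ≤ u a b₀ + u a₀ b := by
  have h : 0 ≤ ∫ t in a₀..a, ∫ z in b₀..b, -derivSnd (derivFst u) t z :=
    intervalIntegral.integral_nonneg ha fun t _ =>
      intervalIntegral.integral_nonneg hb fun z _ => neg_nonneg.2 (hu₁₂ t z)
  simp only [intervalIntegral.integral_neg, hu.integral_integral_derivSnd_derivFst] at h
  linarith

theorem ContDiff.monotone_of_derivFst_nonneg (hu : ContDiff ℝ 1 (uncurry u))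
    (hu₁ : ∀ x y, 0 ≤ derivFst u x y) (y : ℝ) : Monotone fun t => u t y :=
  monotone_of_deriv_nonneg (fun x => (hu.hasDerivAt_derivFst one_ne_zero x y).differentiableAt)
    fun x => hu₁ x y

theorem ContDiff.monotone_of_derivSnd_nonneg (hu : ContDiff ℝ 1 (uncurry u))
    (hu₂ : ∀ x y, 0 ≤ derivSnd u x y) (x : ℝ) : Monotone (u x) :=
  monotone_of_deriv_nonneg (fun y => (hu.hasDerivAt_derivSnd one_ne_zero x y).differentiableAt)
    fun y => hu₂ x y

theorem marginalSurvivalIntegral_derivFst_derivSnd (hu : ContDiff ℝ 1 (uncurry u))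
    (hu₁ : ∀ x y, 0 ≤ derivFst u x y) (hu₂ : ∀ x y, 0 ≤ derivSnd u x y) (hV : Measurable V)
    (hVnn : ∀ ω, 0 ≤ (V ω).1 ∧ 0 ≤ (V ω).2) :
    marginalSurvivalIntegral μ V (fun t => ENNReal.ofReal (derivFst u t 0))
        (fun z => ENNReal.ofReal (derivSnd u 0 z)) =
      ∫⁻ ω, ENNReal.ofReal (u (V ω).1 0 - u 0 0) ∂μ +
        ∫⁻ ω, ENNReal.ofReal (u 0 (V ω).2 - u 0 0) ∂μ := by
  rw [marginalSurvivalIntegral,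
    ← lintegral_comp_eq_lintegral_meas_lt_mul (g := fun t => derivFst u t 0) μ
      (ae_of_all _ fun ω => (hVnn ω).1) hV.fst.aemeasurable
      (fun t _ => (hu.continuous_uncurry_derivFst.uncurry_right 0).intervalIntegrable _ _)
      (ae_of_all _ fun t => hu₁ t 0),
    ← lintegral_comp_eq_lintegral_meas_lt_mul (g := fun z => derivSnd u 0 z) μ
      (ae_of_all _ fun ω => (hVnn ω).2) hV.snd.aemeasurable
      (fun z _ => (hu.continuous_uncurry_derivSnd.uncurry_left 0).intervalIntegrable _ _)
      (ae_of_all _ fun z => hu₂ 0 z)]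
  simp only [hu.integral_derivFst, hu.integral_derivSnd]

theorem jointSurvivalIntegral_neg_derivSnd_derivFst [SFinite μ] (hu : ContDiff ℝ 2 (uncurry u))
    (hu₁₂ : ∀ x y, derivSnd (derivFst u) x y ≤ 0) (hV : Measurable V)
    (hVnn : ∀ ω, 0 ≤ (V ω).1 ∧ 0 ≤ (V ω).2) :
    jointSurvivalIntegral μ V (fun p => ENNReal.ofReal (-derivSnd (derivFst u) p.1 p.2)) =
      ∫⁻ ω, ENNReal.ofReal (u (V ω).1 0 + u 0 (V ω).2 - u 0 0 - u (V ω).1 (V ω).2) ∂μ := by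
  have hk : Continuous fun p : ℝ × ℝ => -derivSnd (derivFst u) p.1 p.2 :=
    (hu.uncurry_derivFst (m := 1) (by norm_num)).continuous_uncurry_derivSnd.neg
  rw [jointSurvivalIntegral, ← lintegral_comp_eq_lintegral_meas_lt_mul_prod μ hV hVnn hk
    fun p => neg_nonneg.2 (hu₁₂ p.1 p.2)]
  refine lintegral_congr fun ω => ?_
  simp only [intervalIntegral.integral_neg, hu.integral_integral_derivSnd_derivFst]
  congr 1
  ring

theorem marginalSurvivalIntegral_ne_top (hu : ContDiff ℝ 1 (uncurry u))
    (hunn : ∀ x y, 0 ≤ x → 0 ≤ y → 0 ≤ u x y) (hu₁ : ∀ x y, 0 ≤ derivFst u x y)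
    (hu₂ : ∀ x y, 0 ≤ derivSnd u x y) (hV : Measurable V) (hVnn : ∀ ω, 0 ≤ (V ω).1 ∧ 0 ≤ (V ω).2)
    (hfin : ∫⁻ ω, ENNReal.ofReal (u (V ω).1 (V ω).2) ∂μ ≠ ∞) :
    marginalSurvivalIntegral μ V (fun t => ENNReal.ofReal (derivFst u t 0))
      (fun z => ENNReal.ofReal (derivSnd u 0 z)) ≠ ∞ := by
  have h00 := hunn 0 0 le_rfl le_rfl
  rw [marginalSurvivalIntegral_derivFst_derivSnd hu hu₁ hu₂ hV hVnn]
  refine ENNReal.add_ne_top.2 ⟨ne_top_of_le_ne_top hfin (lintegral_mono fun ω => ?_),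
    ne_top_of_le_ne_top hfin (lintegral_mono fun ω => ?_)⟩ <;> refine ENNReal.ofReal_le_ofReal ?_
  · linarith [hu.monotone_of_derivSnd_nonneg hu₂ (V ω).1 (hVnn ω).2]
  · linarith [hu.monotone_of_derivFst_nonneg hu₁ (V ω).2 (hVnn ω).1]

theorem lintegral_add_jointSurvivalIntegral_eq [IsProbabilityMeasure μ]
    (hu : ContDiff ℝ 2 (uncurry u)) (hunn : ∀ x y, 0 ≤ x → 0 ≤ y → 0 ≤ u x y)
    (hu₁ : ∀ x y, 0 ≤ derivFst u x y) (hu₂ : ∀ x y, 0 ≤ derivSnd u x y)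
    (hu₁₂ : ∀ x y, derivSnd (derivFst u) x y ≤ 0) (hV : Measurable V)
    (hVnn : ∀ ω, 0 ≤ (V ω).1 ∧ 0 ≤ (V ω).2) :
    ∫⁻ ω, ENNReal.ofReal (u (V ω).1 (V ω).2) ∂μ +
        jointSurvivalIntegral μ V (fun p => ENNReal.ofReal (-derivSnd (derivFst u) p.1 p.2)) =
      ENNReal.ofReal (u 0 0) + marginalSurvivalIntegral μ V
        (fun t => ENNReal.ofReal (derivFst u t 0)) (fun z => ENNReal.ofReal (derivSnd u 0 z)) := by
  have hu₁' : ContDiff ℝ 1 (uncurry u) := hu.of_le one_le_two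
  have hcu : Continuous (uncurry u) := hu.continuous
  have hconst : ENNReal.ofReal (u 0 0) = ∫⁻ _, ENNReal.ofReal (u 0 0) ∂μ := by simp
  have hmeas : Measurable fun ω => ENNReal.ofReal (u (V ω).1 (V ω).2) :=
    (hcu.measurable.comp hV).ennreal_ofReal
  have hmeas₁ : Measurable fun ω => ENNReal.ofReal (u (V ω).1 0 - u 0 0) :=
    (((hcu.uncurry_right 0).measurable.comp hV.fst).sub_const _).ennreal_ofReal
  rw [jointSurvivalIntegral_neg_derivSnd_derivFst hu hu₁₂ hV hVnn,
    marginalSurvivalIntegral_derivFst_derivSnd hu₁' hu₁ hu₂ hV hVnn, hconst,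
    ← lintegral_add_left hmeas, ← lintegral_add_left hmeas₁, ← lintegral_add_left measurable_const]
  refine lintegral_congr fun ω => ?_
  obtain ⟨ha, hb⟩ := hVnn ω
  have hA := hu₁'.monotone_of_derivFst_nonneg hu₁ 0 ha
  have hB := hu₁'.monotone_of_derivSnd_nonneg hu₂ 0 hb
  have hW := hu.add_le_add_of_derivSnd_derivFst_nonpos hu₁₂ ha hb
  rw [← ENNReal.ofReal_add (hunn _ _ ha hb) (by linarith),
    ← ENNReal.ofReal_add (by linarith) (by linarith),
    ← ENNReal.ofReal_add (hunn 0 0 le_rfl le_rfl) (by linarith)]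
  congr 1
  ring

theorem lintegral_ofReal_le_of_jointCDFLE [IsProbabilityMeasure μ]
    (hu : ContDiff ℝ 2 (uncurry u)) (hunn : ∀ x y, 0 ≤ x → 0 ≤ y → 0 ≤ u x y)
    (hu₁ : ∀ x y, 0 ≤ derivFst u x y) (hu₂ : ∀ x y, 0 ≤ derivSnd u x y)
    (hu₁₂ : ∀ x y, derivSnd (derivFst u) x y ≤ 0) {X Y : Ω → ℝ × ℝ} (hX : Measurable X)
    (hY : Measurable Y) (hXnn : ∀ ω, 0 ≤ (X ω).1 ∧ 0 ≤ (X ω).2)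
    (hYnn : ∀ ω, 0 ≤ (Y ω).1 ∧ 0 ≤ (Y ω).2) (hdom : JointCDFLE μ X Y)
    (hXfin : ∫⁻ ω, ENNReal.ofReal (u (X ω).1 (X ω).2) ∂μ ≠ ∞) :
    ∫⁻ ω, ENNReal.ofReal (u (Y ω).1 (Y ω).2) ∂μ ≤ ∫⁻ ω, ENNReal.ofReal (u (X ω).1 (X ω).2) ∂μ := by
  set g₁ : ℝ → ℝ≥0∞ := fun t => ENNReal.ofReal (derivFst u t 0)
  set g₂ : ℝ → ℝ≥0∞ := fun z => ENNReal.ofReal (derivSnd u 0 z)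
  set κ : ℝ × ℝ → ℝ≥0∞ := fun p => ENNReal.ofReal (-derivSnd (derivFst u) p.1 p.2)
  have hmixed : ContDiff ℝ 1 (uncurry (derivFst u)) := hu.uncurry_derivFst (by norm_num)
  have hmixed' : ContDiff ℝ 1 (uncurry (derivSnd u)) := hu.uncurry_derivSnd (by norm_num)
  have hκ : Measurable κ :=
    (hmixed.continuous_uncurry_derivSnd.measurable.neg).ennreal_ofReal
  have hκ₁ (t : ℝ) : ∫⁻ z in Ioi 0, κ (t, z) ≤ g₁ t :=
    lintegral_Ioi_ofReal_neg_le (hmixed.hasDerivAt_derivSnd one_ne_zero t)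
      (hmixed.continuous_uncurry_derivSnd.uncurry_left t) (hu₁₂ t) (hu₁ t)
  have hκ₂ (z : ℝ) : ∫⁻ t in Ioi 0, κ (t, z) ≤ g₂ z := by
    have hu₂₁ : ∀ x y, derivFst (derivSnd u) x y ≤ 0 := derivSnd_derivFst hu ▸ hu₁₂
    simp only [κ, derivSnd_derivFst hu]
    exact lintegral_Ioi_ofReal_neg_le (hmixed'.hasDerivAt_derivFst one_ne_zero · z)
      (hmixed'.continuous_uncurry_derivFst.uncurry_right z) (hu₂₁ · z) (hu₂ · z)
  have hX' := lintegral_add_jointSurvivalIntegral_eq (μ := μ) hu hunn hu₁ hu₂ hu₁₂ hX hXnn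
  have hY' := lintegral_add_jointSurvivalIntegral_eq (μ := μ) hu hunn hu₁ hu₂ hu₁₂ hY hYnn
  have hkey := hdom.marginalSurvivalIntegral_add_jointSurvivalIntegral_le hX hY hκ hκ₁ hκ₂
  have hMX : marginalSurvivalIntegral μ X g₁ g₂ ≠ ∞ :=
    marginalSurvivalIntegral_ne_top (hu.of_le one_le_two) hunn hu₁ hu₂ hX hXnn hXfin
  have hJY : jointSurvivalIntegral μ Y κ ≠ ∞ := by
    have hMY := le_self_add.trans (hdom.marginalSurvivalIntegral_add_le hX hY g₁ g₂)
    exact ne_top_of_le_ne_top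
      (ENNReal.add_ne_top.2 ⟨ENNReal.ofReal_ne_top, ne_top_of_le_ne_top hMX hMY⟩)
      (le_add_self.trans_eq hY')
  refine ENNReal.le_of_add_le_add_right (ENNReal.add_ne_top.2 ⟨hJY, hMX⟩) ?_
  calc _ = ENNReal.ofReal (u 0 0) + marginalSurvivalIntegral μ X g₁ g₂ +
        marginalSurvivalIntegral μ Y g₁ g₂ := by rw [← add_assoc, hY']; ring
    _ = ∫⁻ ω, ENNReal.ofReal (u (X ω).1 (X ω).2) ∂μ +
        (marginalSurvivalIntegral μ Y g₁ g₂ + jointSurvivalIntegral μ X κ) := by rw [← hX']; ring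
    _ ≤ ∫⁻ ω, ENNReal.ofReal (u (X ω).1 (X ω).2) ∂μ +
        (marginalSurvivalIntegral μ X g₁ g₂ + jointSurvivalIntegral μ Y κ) := by gcongr
    _ = _ := by ring

end Utility

theorem bivariate_fsd_implies_expected_utility_le_general
    {Ω : Type*} [MeasurableSpace Ω] (μ : Measure Ω) [IsProbabilityMeasure μ]
    (X Y : Ω → ℝ × ℝ) (hX : Measurable X) (hY : Measurable Y)
    (hXnn : ∀ ω, 0 ≤ (X ω).1 ∧ 0 ≤ (X ω).2)
    (hYnn : ∀ ω, 0 ≤ (Y ω).1 ∧ 0 ≤ (Y ω).2)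
    (u : ℝ → ℝ → ℝ)
    (hunn : ∀ x y, 0 ≤ x → 0 ≤ y → 0 ≤ u x y)
    (huC2 : ContDiff ℝ 2 (fun p : ℝ × ℝ => u p.1 p.2))
    (hu1 : ∀ x y, 0 ≤ deriv (fun t => u t y) x)
    (hu2 : ∀ x y, 0 ≤ deriv (fun z => u x z) y)
    (hu12 : ∀ x y, deriv (fun z => deriv (fun t => u t z) x) y ≤ 0)
    (huXint : Integrable (fun ω => u (X ω).1 (X ω).2) μ)
    (hFSD : ∀ t z : ℝ, 0 ≤ t → 0 ≤ z →
      μ {ω | (X ω).1 ≤ t ∧ (X ω).2 ≤ z} ≤ μ {ω | (Y ω).1 ≤ t ∧ (Y ω).2 ≤ z}) :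
    ∫ ω, u (Y ω).1 (Y ω).2 ∂μ ≤ ∫ ω, u (X ω).1 (X ω).2 ∂μ := by
  have hXfin := huXint.lintegral_lt_top.ne
  rw [integral_eq_lintegral_of_nonneg_ae (ae_of_all _ fun ω => hunn _ _ (hYnn ω).1 (hYnn ω).2)
      (huC2.continuous.comp_aestronglyMeasurable hY.aestronglyMeasurable),
    integral_eq_lintegral_of_nonneg_ae (ae_of_all _ fun ω => hunn _ _ (hXnn ω).1 (hXnn ω).2)
      huXint.aestronglyMeasurable]
  exact ENNReal.toReal_mono hXfin <| lintegral_ofReal_le_of_jointCDFLE huC2 hunn hu1 hu2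
    hu12 hX hY hXnn hYnn (.of_nonneg hXnn hFSD) hXfin

theorem bivariate_fsd_implies_expected_utility_le
    {Ω : Type*} [MeasurableSpace Ω] (μ : Measure Ω) [IsProbabilityMeasure μ]
    (X Y : Ω → ℝ × ℝ) (hX : Measurable X) (hY : Measurable Y)
    (hXnn : ∀ ω, 0 ≤ (X ω).1 ∧ 0 ≤ (X ω).2)
    (hYnn : ∀ ω, 0 ≤ (Y ω).1 ∧ 0 ≤ (Y ω).2)
    (u : ℝ → ℝ → ℝ)
    (hunn : ∀ x y, 0 ≤ x → 0 ≤ y → 0 ≤ u x y)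
    (huC2 : ContDiff ℝ 2 (fun p : ℝ × ℝ => u p.1 p.2))
    (hu1 : ∀ x y, 0 ≤ deriv (fun t => u t y) x)
    (hu2 : ∀ x y, 0 ≤ deriv (fun z => u x z) y)
    (hu12 : ∀ x y, deriv (fun z => deriv (fun t => u t z) x) y ≤ 0)
    (huXint : Integrable (fun ω => u (X ω).1 (X ω).2) μ)
    (huYint : Integrable (fun ω => u (Y ω).1 (Y ω).2) μ)
    (hFSD : ∀ t z : ℝ, 0 ≤ t → 0 ≤ z →
      μ {ω | (X ω).1 ≤ t ∧ (X ω).2 ≤ z} ≤ μ {ω | (Y ω).1 ≤ t ∧ (Y ω).2 ≤ z}) :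
    ∫ ω, u (Y ω).1 (Y ω).2 ∂μ ≤ ∫ ω, u (X ω).1 (X ω).2 ∂μ :=
  bivariate_fsd_implies_expected_utility_le_general μ X Y hX hY hXnn hYnn u hunn huC2 hu1 hu2 hu12
    huXint hFSD
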